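/- arXiv:2110.14888 — 3 statements merged into one kernel-verified Lean document; each statement's English description precedes it below -/
import Mathlib

section
/- Let f: ℕ → ℝ satisfy f(0) = 0 and f(t+1) ≥ c·F + (1 - γc)·f(t) with F ≥ 0, c > 0, γ ≥ 1, γc ≤ 1. Then f(T) ≥ (F/γ)·(1 - exp(-c·γ·T)) for all T ≥ 0. -/
/-!
With `q = 1 - γc`, the recursion says that `f t - F/γ` is bounded below by a sequence contracting
by the factor `q` at each step, so `f T ≥ (F/γ)(1 - q^T)` by induction; since `0 ≤ q ≤ e^{-γc}`,
`q^T ≤ e^{-cγT}`.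
-/

open Real

theorem le_of_affine_recursion_ge {f : ℕ → ℝ} {a L : ℝ} (ha : 0 ≤ 1 - a)
    (hrec : ∀ t, a * L + (1 - a) * f t ≤ f (t + 1)) (T : ℕ) :
    L + (1 - a) ^ T * (f 0 - L) ≤ f T := by
  induction T with
  | zero => simp
  | succ t ih =>
    calc L + (1 - a) ^ (t + 1) * (f 0 - L)
        = a * L + (1 - a) * (L + (1 - a) ^ t * (f 0 - L)) := by ring
      _ ≤ a * L + (1 - a) * f t := by gcongr
      _ ≤ f (t + 1) := hrec t

theorem one_sub_pow_le_exp_neg_mul {x : ℝ} (hx : 0 ≤ 1 - x) (n : ℕ) :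
    (1 - x) ^ n ≤ exp (-(x * n)) := by
  calc (1 - x) ^ n ≤ exp (-x) ^ n := pow_le_pow_left₀ hx (one_sub_le_exp_neg x) n
    _ = exp (-(x * n)) := by rw [← exp_nat_mul]; ring_nf

theorem recursion_exp_bound_general (f : ℕ → ℝ) (c γ F : ℝ)
    (hF : 0 ≤ F) (hγ : 1 ≤ γ) (hγc : γ * c ≤ 1)
    (h0 : f 0 = 0)
    (hrec : ∀ t, f (t + 1) ≥ c * F + (1 - γ * c) * f t) :
    ∀ T : ℕ, f T ≥ (F / γ) * (1 - Real.exp (-(c * γ * T))) := by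
  intro T
  have hγ0 : γ ≠ 0 := by positivity
  have hq : 0 ≤ 1 - γ * c := by linarith
  have hrec' : ∀ t, γ * c * (F / γ) + (1 - γ * c) * f t ≤ f (t + 1) := fun t => by
    convert hrec t using 2; field_simp
  have hgeom := le_of_affine_recursion_ge hq hrec' T
  have hexp := one_sub_pow_le_exp_neg_mul hq T
  rw [h0] at hgeom
  calc F / γ * (1 - exp (-(c * γ * T)))
      ≤ F / γ * (1 - (1 - γ * c) ^ T) := by
        rw [mul_comm c γ]; gcongr
    _ = F / γ + (1 - γ * c) ^ T * (0 - F / γ) := by ring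
    _ ≤ f T := hgeom

theorem recursion_exp_bound (f : ℕ → ℝ) (c γ F : ℝ)
    (hF : 0 ≤ F) (hc : 0 < c) (hγ : 1 ≤ γ) (hγc : γ * c ≤ 1)
    (h0 : f 0 = 0)
    (hrec : ∀ t, f (t + 1) ≥ c * F + (1 - γ * c) * f t) :
    ∀ T : ℕ, f T ≥ (F / γ) * (1 - Real.exp (-(c * γ * T))) :=
  recursion_exp_bound_general f c γ F hF hγ hγc h0 hrec
end

section
/- For a ≥ 2, the function g(x) = a/(x·log(x/(x-1))) + 1/x is monotonically increasing on the interval (1, ∞). -/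
/-! For `x > 1` put `u = log (x / (x - 1)) > 0`. Then `(x - 1)⁻¹ = exp u - 1`, and the
derivative of `g` is `(a (exp u - 1 - u) - u²) / (x u)²`. Its numerator is nonnegative because
`exp u ≥ 1 + u + u² / 2` for `u ≥ 0` and `a ≥ 2`. -/

open Real Set

lemma sq_le_mul_exp_sub_one_sub {a u : ℝ} (ha : 2 ≤ a) (hu : 0 ≤ u) :
    u ^ 2 ≤ a * (exp u - 1 - u) := by
  nlinarith [quadratic_le_exp_of_nonneg hu, sq_nonneg u]

lemma hasDerivAt_log_div_sub_one {x : ℝ} (hx : 1 < x) :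
    HasDerivAt (fun y => log (y / (y - 1))) (-(x * (x - 1))⁻¹) x := by
  have hx0 : x ≠ 0 := by positivity
  have hx1 : x - 1 ≠ 0 := sub_ne_zero.2 hx.ne'
  have hquot : HasDerivAt (fun y => y / (y - 1)) ((1 * (x - 1) - x * 1) / (x - 1) ^ 2) x :=
    (hasDerivAt_id' x).fun_div ((hasDerivAt_id' x).sub_const 1) hx1
  refine (hquot.log (div_ne_zero hx0 hx1)).congr_deriv ?_
  field_simp
  ring

lemma hasDerivAt_div_mul_log_div_sub_one_add_inv (a : ℝ) {x : ℝ} (hx : 1 < x) :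
    HasDerivAt (fun y => a / (y * log (y / (y - 1))) + 1 / y)
      ((a * ((x - 1)⁻¹ - log (x / (x - 1))) - log (x / (x - 1)) ^ 2) /
        (x * log (x / (x - 1))) ^ 2) x := by
  have hx0 : x ≠ 0 := by positivity
  have hx1 : x - 1 ≠ 0 := sub_ne_zero.2 hx.ne'
  have hL : log (x / (x - 1)) ≠ 0 :=
    (log_pos ((one_lt_div (by linarith)).2 (by linarith))).ne'
  have hden : HasDerivAt (fun y => y * log (y / (y - 1)))
      (1 * log (x / (x - 1)) + x * -(x * (x - 1))⁻¹) x :=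
    (hasDerivAt_id' x).mul (hasDerivAt_log_div_sub_one hx)
  have hinv : HasDerivAt (fun y : ℝ => 1 / y) (-(x ^ 2)⁻¹) x := by
    simpa only [one_div] using hasDerivAt_inv hx0
  refine ((hasDerivAt_const x a).fun_div hden (mul_ne_zero hx0 hL)).fun_add hinv
    |>.congr_deriv ?_
  field_simp
  ring

theorem g_monotone (a : ℝ) (ha : 2 ≤ a) :
    MonotoneOn (fun x : ℝ => a / (x * Real.log (x / (x - 1))) + 1 / x)
      (Set.Ioi (1 : ℝ)) := by
  have hderiv := fun x (hx : x ∈ Ioi (1 : ℝ)) =>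
    hasDerivAt_div_mul_log_div_sub_one_add_inv a hx
  refine monotoneOn_of_hasDerivWithinAt_nonneg (convex_Ioi 1)
    (fun x hx => (hderiv x hx).continuousAt.continuousWithinAt)
    (fun x hx => (hderiv x (interior_subset hx)).hasDerivWithinAt) fun x hx => ?_
  rw [interior_Ioi] at hx
  have hx1 : 0 < x - 1 := sub_pos.2 hx
  set u := log (x / (x - 1))
  have hu : 0 < u := log_pos ((one_lt_div hx1).2 (by linarith))
  have hexp : (x - 1)⁻¹ = exp u - 1 := by
    rw [exp_log (div_pos (by linarith) hx1)]
    field_simp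
    ring
  rw [hexp]
  exact div_nonneg (by linarith [sq_le_mul_exp_sub_one_sub ha hu.le]) (sq_nonneg _)
end

section
/- Let f be a monotone nonnegative sequence function with f(∅)=0, let σ be a sequence of length K with f(σ) = F, and suppose a greedy sequence x₁, x₂, ... satisfies, for each t, Δ(x_{t+1} | x_{1:t}) ≥ (1/α)·max_x Δ(x | x_{1:t}), the submodularity ratio bound Δ(σ_i | x_{1:t} ⊕ σ_{1:i-1}) ≤ (1/ρ)·Δ(σ_i | x_{1:t}) for all i, t, and the backward curvature bound f(x_{1:t}) - f(x_{1:t} ⊕ σ) + f(σ) ≤ γ·f(x_{1:t}). Then for all t: f(σ) - γ·f(x_{1:t}) ≤ (K/ρ)·max_x Δ(x | x_{1:t}), and hence f(x_{1:t+1}) ≥ (ρ/(αK))·f(σ) + (1 - γρ/(αK))·f(x_{1:t}). -/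
/-!
Telescoping `f (s ++ σ) - f s` along `σ` writes it as a sum of `K` marginal gains, each of which the
submodularity ratio bounds by `1/ρ` times a marginal gain at `s`, hence by `(1/ρ) max_x Δ(x | s)`.
Together with the curvature bound this gives `f σ - γ f(s) ≤ (K/ρ) max_x Δ(x | s)`, and the
`α`-greedy step gains at least `1/α` of that maximum.
-/

section Marginal

variable {X : Type*}

/-- `Δ(x | s)`, the marginal gain of appending `x` to `s`. -/
def marginal (f : List X → ℝ) (s : List X) (x : X) : ℝ := f (s ++ [x]) - f s

theorem marginal_le_iSup [Finite X] (f : List X → ℝ) (s : List X) (x : X) :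
    marginal f s x ≤ ⨆ y, marginal f s y :=
  le_ciSup (Set.finite_range _).bddAbove x

theorem sub_le_length_mul_of_marginal_le (f : List X → ℝ) (s σ : List X) (c : ℝ)
    (h : ∀ i (hi : i < σ.length), marginal f (s ++ σ.take i) σ[i] ≤ c) :
    f (s ++ σ) - f s ≤ σ.length * c := by
  have htel := Finset.sum_range_sub (fun i => f (s ++ σ.take i)) σ.length
  simp only [List.take_length, List.take_zero, List.append_nil] at htel
  rw [← htel]
  refine (Finset.sum_le_card_nsmul _ _ c fun i hi => ?_).trans_eq
    (by rw [Finset.card_range, nsmul_eq_mul])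
  have hi : i < σ.length := Finset.mem_range.mp hi
  rw [← List.take_concat_get' σ i hi, ← List.append_assoc]
  exact h i hi

theorem sub_mul_le_length_div_mul_iSup_marginal [Finite X] (f : List X → ℝ) (s σ : List X)
    {ρ γ : ℝ} (hρ0 : 0 < ρ)
    (hρ : ∀ i (hi : i < σ.length),
      marginal f (s ++ σ.take i) σ[i] ≤ 1 / ρ * marginal f s σ[i])
    (hγ : f s - f (s ++ σ) + f σ ≤ γ * f s) :
    f σ - γ * f s ≤ σ.length / ρ * ⨆ x, marginal f s x := by
  have htel := sub_le_length_mul_of_marginal_le f s σ (1 / ρ * ⨆ x, marginal f s x)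
    fun i hi => (hρ i hi).trans <|
      mul_le_mul_of_nonneg_left (marginal_le_iSup f s _) (one_div_nonneg.mpr hρ0.le)
  rw [← mul_assoc, mul_one_div] at htel
  linarith

theorem add_div_mul_le_of_le_add_div {v v' G S α ρ K : ℝ} (hα : 0 < α) (hρ : 0 < ρ) (hK : 0 ≤ K)
    (hmono : v ≤ v') (hgreedy : v + 1 / α * S ≤ v') (hgap : G ≤ K / ρ * S) :
    v + ρ / (α * K) * G ≤ v' := by
  rcases hK.eq_or_lt with rfl | hK
  · -- `ρ / (α * 0) = 0`, so only monotonicity is left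
    simpa using hmono
  have hG : ρ / (α * K) * G ≤ 1 / α * S :=
    calc ρ / (α * K) * G ≤ ρ / (α * K) * (K / ρ * S) := by gcongr
      _ = 1 / α * S := by field_simp
  linarith

end Marginal

theorem greedy_recursion_derivation_general {X : Type*} [Fintype X]
    (f : List X → ℝ)
    (hmono : ∀ (s : List X) (x : X), f s ≤ f (s ++ [x]))
    (σ : List X) (K : ℕ) (hK : σ.length = K) (F : ℝ) (hF : f σ = F)
    (α ρ γ : ℝ) (hα : 1 ≤ α) (hρ0 : 0 < ρ)
    (xs : ℕ → X)
    -- greedy prefix of length t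
    (pre : ℕ → List X) (hpre : ∀ t, pre t = (List.range t).map xs)
    -- α-approximate greedy rule
    (hgreedy : ∀ t, f (pre t ++ [xs t]) - f (pre t) ≥
      (1 / α) * ⨆ x : X, (f (pre t ++ [x]) - f (pre t)))
    -- pointwise submodularity ratio bound
    (hρ : ∀ t, ∀ i (hi : i < σ.length),
      f ((pre t ++ σ.take i) ++ [σ.get ⟨i, hi⟩]) - f (pre t ++ σ.take i) ≤
        (1 / ρ) * (f (pre t ++ [σ.get ⟨i, hi⟩]) - f (pre t)))
    -- pointwise backward curvature bound
    (hγc : ∀ t, f (pre t) - f (pre t ++ σ) + f σ ≤ γ * f (pre t)) :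
    ∀ t, F - γ * f (pre t) ≤ ((K : ℝ) / ρ) * ⨆ x : X, (f (pre t ++ [x]) - f (pre t)) ∧
      f (pre (t + 1)) ≥ (ρ / (α * K)) * F + (1 - γ * ρ / (α * K)) * f (pre t) := by
  intro t
  subst hK hF
  have hgap : f σ - γ * f (pre t) ≤ σ.length / ρ * ⨆ x, marginal f (pre t) x :=
    sub_mul_le_length_div_mul_iSup_marginal f (pre t) σ hρ0 (hρ t) (hγc t)
  refine ⟨hgap, ?_⟩
  have hsucc : pre (t + 1) = pre t ++ [xs t] := by simp [hpre, List.range_succ]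
  have hstep := add_div_mul_le_of_le_add_div (zero_lt_one.trans_le hα) hρ0
    (Nat.cast_nonneg σ.length) (hmono (pre t) (xs t)) (le_sub_iff_add_le'.mp (hgreedy t)) hgap
  rw [hsucc, ge_iff_le]
  convert hstep using 1
  ring

theorem greedy_recursion_derivation {X : Type*} [Fintype X] [Nonempty X]
    (f : List X → ℝ) (h0 : f [] = 0)
    (hmono : ∀ (s : List X) (x : X), f s ≤ f (s ++ [x]))
    (σ : List X) (K : ℕ) (hK : σ.length = K) (F : ℝ) (hF : f σ = F)
    (α ρ γ : ℝ) (hα : 1 ≤ α) (hρ0 : 0 < ρ) (hρ1 : ρ ≤ 1) (hγ : 1 ≤ γ)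
    (xs : ℕ → X)
    -- greedy prefix of length t
    (pre : ℕ → List X) (hpre : ∀ t, pre t = (List.range t).map xs)
    -- α-approximate greedy rule
    (hgreedy : ∀ t, f (pre t ++ [xs t]) - f (pre t) ≥
      (1 / α) * ⨆ x : X, (f (pre t ++ [x]) - f (pre t)))
    -- pointwise submodularity ratio bound
    (hρ : ∀ t, ∀ i (hi : i < σ.length),
      f ((pre t ++ σ.take i) ++ [σ.get ⟨i, hi⟩]) - f (pre t ++ σ.take i) ≤
        (1 / ρ) * (f (pre t ++ [σ.get ⟨i, hi⟩]) - f (pre t)))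
    -- pointwise backward curvature bound
    (hγc : ∀ t, f (pre t) - f (pre t ++ σ) + f σ ≤ γ * f (pre t)) :
    ∀ t, F - γ * f (pre t) ≤ ((K : ℝ) / ρ) * ⨆ x : X, (f (pre t ++ [x]) - f (pre t)) ∧
      f (pre (t + 1)) ≥ (ρ / (α * K)) * F + (1 - γ * ρ / (α * K)) * f (pre t) :=
  greedy_recursion_derivation_general f hmono σ K hK F hF α ρ γ hα hρ0 xs pre hpre hgreedy hρ hγc
end
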